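/- Let f, g ∈ K[X₁,…,X_n] where g is unidimensional of direction δ and let f = f₁ + ⋯ + f_s be the decomposition of f into its δ-components. Then the multiplicity of g as a factor of f equals the minimum over t of the multiplicity of g as a factor of f_t: mult_g(f) = min_{1≤t≤s} mult_g(f_t). -/

import Mathlib

/-!
Grade `K[X₁,…,Xₙ]` by the group `ℤⁿ/ℤδ`, giving `X^e` the class of `e`. The `δ`-components of
`f` are then exactly its nonzero homogeneous components, and a unidimensional `g` of direction
`δ` is homogeneous. Multiplication by a homogeneous `g^μ` shifts degrees, so each homogeneous
component of `g^μ h` is `g^μ` times a component of `h`. Hence `g^μ ∣ f` iff `g^μ ∣ f_t` for every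
`t`, and the multiplicities, being the largest such `μ`, agree.
-/

variable {K : Type*} {n : ℕ}

/-- A polynomial is unidimensional of direction `δ ∈ ℤⁿ` if it has at least two
monomials and the difference of the exponent vectors of any two of its monomials is
an integer multiple of `δ`. -/
def Unidimensional [CommSemiring K] (δ : Fin n → ℤ) (f : MvPolynomial (Fin n) K) :
    Prop :=
  2 ≤ f.support.card ∧ ∀ a ∈ f.support, ∀ b ∈ f.support,
    ∃ l : ℤ, ∀ i, (a i : ℤ) - (b i : ℤ) = l * δ i

/-- The multiplicity of `g` as a factor of `f`, i.e. the largest `μ` with `g ^ μ ∣ f`. -/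
noncomputable def multOf {R : Type*} [CommRing R] (g f : R) : ℕ :=
  sSup {μ : ℕ | g ^ μ ∣ f}

section multOf

variable {R : Type*} [CommRing R] {g : R}

theorem multOf_of_isUnit (hg : IsUnit g) (f : R) : multOf g f = 0 := by
  have : {μ : ℕ | g ^ μ ∣ f} = Set.univ :=
    Set.eq_univ_of_forall fun μ => (hg.pow μ).dvd
  rw [multOf, this]
  exact Set.Infinite.Nat.sSup_eq_zero Set.infinite_univ

theorem FiniteMultiplicity.multOf_eq {f : R} (hf : FiniteMultiplicity g f) :
    multOf g f = multiplicity g f := by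
  have : {μ : ℕ | g ^ μ ∣ f} = Set.Iic (multiplicity g f) :=
    Set.ext fun _ => hf.pow_dvd_iff_le_multiplicity
  rw [multOf, this, csSup_Iic]

theorem multOf_eq_iInf_of_pow_dvd_iff [IsCancelMulZero R] [WfDvdMonoid R] {ι : Type*}
    [Finite ι] {f : R} {F : ι → R} (hF : ∀ t, F t ≠ 0)
    (hdvd : ∀ μ, g ^ μ ∣ f ↔ ∀ t, g ^ μ ∣ F t) :
    multOf g f = ⨅ t, multOf g (F t) := by
  by_cases hg : IsUnit g
  · simp [multOf_of_isUnit hg]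
  have hfin t : FiniteMultiplicity g (F t) := .of_not_isUnit hg (hF t)
  rcases isEmpty_or_nonempty ι with hι | hι
  · simp [multOf, hdvd]
  have : {μ : ℕ | g ^ μ ∣ f} = Set.Iic (⨅ t, multiplicity g (F t)) := by
    ext μ
    simp [hdvd, (hfin _).pow_dvd_iff_le_multiplicity, le_ciInf_iff]
  rw [multOf, this, csSup_Iic]
  simp only [(hfin _).multOf_eq]

end multOf

namespace MvPolynomial

variable {σ R M : Type*} [CommSemiring R] {w : σ → M}

theorem IsWeightedHomogeneous.weightedHomogeneousComponent_mul_add [AddCancelCommMonoid M]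
    {g : MvPolynomial σ R} {m : M} (hg : IsWeightedHomogeneous w g m)
    (h : MvPolynomial σ R) (j : M) :
    weightedHomogeneousComponent w (m + j) (g * h) = g * weightedHomogeneousComponent w j h := by
  classical
  let := weightedGradedAlgebra R w
  rw [← weightedDecomposition.decompose'_apply, ← weightedDecomposition.decompose'_apply]
  exact DirectSum.coe_decompose_mul_add_of_left_mem _
    ((mem_weightedHomogeneousSubmodule _ _ _ _).2 hg)

theorem IsWeightedHomogeneous.dvd_weightedHomogeneousComponent [AddCommGroup M]
    {g f : MvPolynomial σ R} {m : M} (hg : IsWeightedHomogeneous w g m) (hgf : g ∣ f) (d : M) :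
    g ∣ weightedHomogeneousComponent w d f := by
  obtain ⟨h, rfl⟩ := hgf
  rw [← add_sub_cancel m d, hg.weightedHomogeneousComponent_mul_add]
  exact dvd_mul_right g _

theorem weightedHomogeneousComponent_sum_of_injective [AddCommMonoid M] {ι : Type*} [Fintype ι]
    {F : ι → MvPolynomial σ R} {d : ι → M} (hF : ∀ t, IsWeightedHomogeneous w (F t) (d t))
    (hd : Function.Injective d) (t : ι) :
    weightedHomogeneousComponent w (d t) (∑ t', F t') = F t := by
  classical
  rw [map_sum, Finset.sum_eq_single t]
  · exact (hF t).weightedHomogeneousComponent_same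
  · exact fun t' _ ht' => (hF t').weightedHomogeneousComponent_ne _ (hd.ne ht'.symm)
  · exact fun ht => absurd (Finset.mem_univ t) ht

section lineWeight

variable [DecidableEq σ]

noncomputable def lineWeight (δ : σ → ℤ) : σ → (σ → ℤ) ⧸ AddSubgroup.zmultiples δ :=
  fun i => QuotientAddGroup.mk (Pi.single i 1)

theorem weight_lineWeight (δ : σ → ℤ) (e : σ →₀ ℕ) :
    Finsupp.weight (lineWeight δ) e = QuotientAddGroup.mk (fun i => (e i : ℤ)) := by
  have : (fun i => (e i : ℤ)) = e.sum fun i k => k • Pi.single i 1 := by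
    ext j
    simp [Finsupp.sum, Finset.sum_apply, Pi.single_apply]
  rw [this, Finsupp.weight_apply, ← QuotientAddGroup.mk'_apply, map_finsuppSum]
  simp [lineWeight]

theorem weight_lineWeight_eq_iff {δ : σ → ℤ} {a b : σ →₀ ℕ} :
    Finsupp.weight (lineWeight δ) a = Finsupp.weight (lineWeight δ) b ↔
      ∃ l : ℤ, ∀ i, (a i : ℤ) - b i = l * δ i := by
  rw [weight_lineWeight, weight_lineWeight, QuotientAddGroup.eq_iff_sub_mem,
    AddSubgroup.mem_zmultiples_iff]
  simp [_root_.funext_iff, eq_comm]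

theorem isWeightedHomogeneous_lineWeight {δ : σ → ℤ} {p : MvPolynomial σ R}
    (hp : ∀ a ∈ p.support, ∀ b ∈ p.support, ∃ l : ℤ, ∀ i, (a i : ℤ) - b i = l * δ i)
    {a : σ →₀ ℕ} (ha : a ∈ p.support) :
    IsWeightedHomogeneous (lineWeight δ) p (Finsupp.weight (lineWeight δ) a) :=
  fun _ hb => weight_lineWeight_eq_iff.2 (hp _ (mem_support_iff.2 hb) a ha)

end lineWeight

end MvPolynomial

open MvPolynomial

theorem Unidimensional.exists_isWeightedHomogeneous [CommSemiring K] {δ : Fin n → ℤ}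
    {g : MvPolynomial (Fin n) K} (hg : Unidimensional δ g) :
    ∃ m, IsWeightedHomogeneous (lineWeight δ) g m := by
  obtain ⟨a, ha⟩ := Finset.card_pos.1 (lt_of_lt_of_le two_pos hg.1)
  exact ⟨_, isWeightedHomogeneous_lineWeight hg.2 ha⟩

theorem multOf_eq_min_components_general [Field K]
    (δ : Fin n → ℤ) (g f : MvPolynomial (Fin n) K)
    (hg : Unidimensional δ g)
    (s : ℕ) (F : Fin s → MvPolynomial (Fin n) K)
    (hF0 : ∀ t, F t ≠ 0)
    (hsum : f = ∑ t, F t)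
    (hcomp : ∀ t, ∀ a ∈ (F t).support, ∀ b ∈ (F t).support,
      ∃ l : ℤ, ∀ i, (a i : ℤ) - (b i : ℤ) = l * δ i)
    (hmax : ∀ t t', t ≠ t' → ∀ a ∈ (F t).support, ∀ b ∈ (F t').support,
      ¬ ∃ l : ℤ, ∀ i, (a i : ℤ) - (b i : ℤ) = l * δ i) :
    multOf g f = ⨅ t, multOf g (F t) := by
  obtain ⟨m, hgm⟩ := hg.exists_isWeightedHomogeneous
  choose x hx using fun t => support_nonempty.2 (hF0 t)
  have hF t :
      IsWeightedHomogeneous (lineWeight δ) (F t) (Finsupp.weight (lineWeight δ) (x t)) :=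
    isWeightedHomogeneous_lineWeight (hcomp t) (hx t)
  have hinj : Function.Injective fun t => Finsupp.weight (lineWeight δ) (x t) := fun t t' h =>
    by_contra fun hne => hmax t t' hne _ (hx t) _ (hx t') (weight_lineWeight_eq_iff.1 h)
  refine multOf_eq_iInf_of_pow_dvd_iff hF0 fun μ => ⟨fun hdvd t => ?_, fun hdvd => ?_⟩
  · rw [← weightedHomogeneousComponent_sum_of_injective hF hinj t, ← hsum]
    exact (hgm.pow μ).dvd_weightedHomogeneousComponent hdvd _
  · rw [hsum]
    exact Finset.dvd_sum fun t _ => hdvd t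

/-- The unidimensional factors of direction `δ` of `f` are the common factors of its
`δ`-components: if `f = f₁ + ⋯ + f_s` is the decomposition of `f` into `δ`-components
(nonzero summands whose supports lie on lines of direction `δ`, maximal in the sense
that monomials of distinct components are not aligned along `δ`), then
`mult_g(f) = min_t mult_g(f_t)` for every unidimensional `g` of direction `δ`. -/
theorem multOf_eq_min_components [Field K]
    (δ : Fin n → ℤ) (g f : MvPolynomial (Fin n) K)
    (hg : Unidimensional δ g)
    (s : ℕ) (hs : 0 < s) (F : Fin s → MvPolynomial (Fin n) K)
    (hF0 : ∀ t, F t ≠ 0)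
    (hsum : f = ∑ t, F t)
    (hcomp : ∀ t, ∀ a ∈ (F t).support, ∀ b ∈ (F t).support,
      ∃ l : ℤ, ∀ i, (a i : ℤ) - (b i : ℤ) = l * δ i)
    (hmax : ∀ t t', t ≠ t' → ∀ a ∈ (F t).support, ∀ b ∈ (F t').support,
      ¬ ∃ l : ℤ, ∀ i, (a i : ℤ) - (b i : ℤ) = l * δ i) :
    multOf g f = ⨅ t, multOf g (F t) :=
  multOf_eq_min_components_general δ g f hg s F hF0 hsum hcomp hmax
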